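/- In a Garside group G, an element y is absorbable if and only if y⁻¹ is absorbable. -/

import Mathlib

/-- A finite-type Garside structure on a group `G`. -/
structure GarsideStructure (G : Type*) [Group G] where
  /-- the submonoid of positive elements -/
  P : Submonoid G
  /-- the Garside element -/
  Δ : G
  delta_pos : Δ ∈ P
  pos_antisymm : ∀ x : G, x ∈ P → x⁻¹ ∈ P → x = 1
  /-- gcd for the prefix order -/
  wedge : G → G → G
  /-- lcm for the prefix order -/
  vee : G → G → G
  wedge_le_left : ∀ x y, (wedge x y)⁻¹ * x ∈ P
  wedge_le_right : ∀ x y, (wedge x y)⁻¹ * y ∈ P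
  le_wedge : ∀ x y z, z⁻¹ * x ∈ P → z⁻¹ * y ∈ P → z⁻¹ * wedge x y ∈ P
  left_le_vee : ∀ x y, x⁻¹ * vee x y ∈ P
  right_le_vee : ∀ x y, y⁻¹ * vee x y ∈ P
  vee_le : ∀ x y z, x⁻¹ * z ∈ P → y⁻¹ * z ∈ P → (vee x y)⁻¹ * z ∈ P
  /-- gcd for the suffix order -/
  rwedge : G → G → G
  /-- lcm for the suffix order -/
  rvee : G → G → G
  rwedge_le_left : ∀ x y, x * (rwedge x y)⁻¹ ∈ P
  rwedge_le_right : ∀ x y, y * (rwedge x y)⁻¹ ∈ P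
  le_rwedge : ∀ x y z, x * z⁻¹ ∈ P → y * z⁻¹ ∈ P → rwedge x y * z⁻¹ ∈ P
  left_le_rvee : ∀ x y, rvee x y * x⁻¹ ∈ P
  right_le_rvee : ∀ x y, rvee x y * y⁻¹ ∈ P
  rvee_le : ∀ x y z, z * x⁻¹ ∈ P → z * y⁻¹ ∈ P → z * (rvee x y)⁻¹ ∈ P
  /-- the set of simple elements is finite -/
  simples_finite : {s : G | s ∈ P ∧ s⁻¹ * Δ ∈ P}.Finite
  /-- the simple elements generate the group -/
  simples_generate : Subgroup.closure {s : G | s ∈ P ∧ s⁻¹ * Δ ∈ P} = ⊤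
  /-- conjugation by `Δ` preserves `P` -/
  conj_delta : ∀ x : G, x ∈ P ↔ Δ⁻¹ * x * Δ ∈ P
  /-- `P` is noetherian -/
  noetherian : ∀ x ∈ P, x ≠ 1 →
    ∃ N : ℕ, ∀ l : List G, (∀ a ∈ l, a ∈ P ∧ a ≠ 1) → l.prod = x → l.length ≤ N

namespace GarsideStructure

variable {G : Type*} [Group G] (g : GarsideStructure G)

/-- the prefix order -/
def le (x y : G) : Prop := x⁻¹ * y ∈ g.P

/-- the suffix order: `rle x y` means `x ≽ y`, i.e. `y` is a suffix of `x` -/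
def rle (x y : G) : Prop := x * y⁻¹ ∈ g.P

/-- `IsInf x k` : `k` is the infimum of `x`, `max {j : Δ^j ≼ x}` -/
def IsInf (x : G) (k : ℤ) : Prop := g.le (g.Δ ^ k) x ∧ ∀ j : ℤ, g.le (g.Δ ^ j) x → j ≤ k

/-- `IsSup x k` : `k` is the supremum of `x`, `min {j : x ≼ Δ^j}` -/
def IsSup (x : G) (k : ℤ) : Prop := g.le x (g.Δ ^ k) ∧ ∀ j : ℤ, g.le x (g.Δ ^ j) → k ≤ j

/-- an element of a Garside group is absorbable -/
def Absorbable (y : G) : Prop :=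
  (g.IsInf y 0 ∨ g.IsSup y 0) ∧
  ∃ (x : G) (i s : ℤ), g.IsInf x i ∧ g.IsSup x s ∧ g.IsInf (x * y) i ∧ g.IsSup (x * y) s

/-- simple elements: positive prefixes of `Δ` -/
def Simple (s : G) : Prop := s ∈ g.P ∧ g.le s g.Δ

/-- atoms: minimal nontrivial positive elements -/
def Atom (a : G) : Prop := a ∈ g.P ∧ a ≠ 1 ∧ ∀ u v : G, u ∈ g.P → v ∈ g.P → u * v = a → u = 1 ∨ v = 1

/-- `(s,t)` is left-weighted: `∂s ∧ t = 1` -/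
def LeftWeighted (s t : G) : Prop :=
  g.Simple s ∧ g.Simple t ∧ g.wedge (s⁻¹ * g.Δ) t = 1

/-- `(s,t)` is right-weighted: `s ∧^Lsh ∂⁻¹t = 1` -/
def RightWeighted (s t : G) : Prop :=
  g.Simple s ∧ g.Simple t ∧ g.rwedge s (g.Δ * t⁻¹) = 1

/-- `l` is the left normal form (of the element `l.prod`, which has infimum `0`) -/
def IsLNF (l : List G) : Prop :=
  (∀ s ∈ l, g.Simple s ∧ s ≠ 1) ∧ l.Chain' g.LeftWeighted ∧ ∀ h ∈ l.head?, h ≠ g.Δ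

/-- `l` is the right normal form, written in product order (`u = s'_r ⋯ s'_1` corresponds
to the list `[s'_r, …, s'_1]`); the last pair condition says `s'_1 ≠ Δ`. -/
def IsRNF (l : List G) : Prop :=
  (∀ s ∈ l, g.Simple s ∧ s ≠ 1) ∧ l.Chain' g.RightWeighted ∧ ∀ h ∈ l.getLast?, h ≠ g.Δ

/-- the vertex set of the additional length graph: left cosets `gΔ^ℤ` -/
abbrev ALVertex := G ⧸ Subgroup.zpowers g.Δ

/-- one coset can be reached from the other by multiplying the distinguished
representative by a nontrivial proper simple element or by an absorbable element -/
def ALStep (v w : G ⧸ Subgroup.zpowers g.Δ) : Prop :=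
  ∃ d : G, g.IsInf d 0 ∧ (d : G ⧸ Subgroup.zpowers g.Δ) = v ∧
    ((∃ s : G, g.Simple s ∧ s ≠ 1 ∧ s ≠ g.Δ ∧ ((d * s : G) : G ⧸ Subgroup.zpowers g.Δ) = w) ∨
     (∃ y : G, g.Absorbable y ∧ ((d * y : G) : G ⧸ Subgroup.zpowers g.Δ) = w))

/-- the additional length graph -/
def ALGraph : SimpleGraph (G ⧸ Subgroup.zpowers g.Δ) where
  Adj v w := v ≠ w ∧ (g.ALStep v w ∨ g.ALStep w v)
  symm := ⟨fun v w h => ⟨Ne.symm h.1, h.2.symm⟩⟩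
  loopless := ⟨fun v h => h.1 rfl⟩

end GarsideStructure


/-!
Conjugation by `Δ` preserves positivity, so `Δ^k ≼ x` iff `x⁻¹ ≼ Δ^(-k)`; hence inversion turns
`inf = k` into `sup = -k` and back, and preserves the condition `inf = 0 ∨ sup = 0`. If `x`
absorbs `y`, then `x * y` absorbs `y⁻¹`, since `x * y * y⁻¹ = x`.
-/

namespace GarsideStructure

variable {G : Type*} [Group G] (g : GarsideStructure G)

lemma conj_delta_mem_iff (p : G) : g.Δ * p * g.Δ⁻¹ ∈ g.P ↔ p ∈ g.P := by
  rw [g.conj_delta]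
  group

lemma conj_zpow_delta_mem_iff (n : ℤ) (p : G) : g.Δ ^ n * p * g.Δ ^ (-n) ∈ g.P ↔ p ∈ g.P := by
  induction n using Int.induction_on generalizing p with
  | zero => simp
  | succ n ih =>
    have h : g.Δ ^ ((n : ℤ) + 1) * p * g.Δ ^ (-((n : ℤ) + 1))
        = g.Δ * (g.Δ ^ (n : ℤ) * p * g.Δ ^ (-(n : ℤ))) * g.Δ⁻¹ := by group
    rw [h, g.conj_delta_mem_iff, ih]
  | pred n ih =>
    have h : g.Δ ^ (-(n : ℤ) - 1) * p * g.Δ ^ (-(-(n : ℤ) - 1))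
        = g.Δ⁻¹ * (g.Δ ^ (-(n : ℤ)) * p * g.Δ ^ (-(-(n : ℤ)))) * g.Δ := by group
    rw [h, ← g.conj_delta, ih]

lemma le_zpow_delta_iff_inv_le (k : ℤ) (x : G) :
    g.le (g.Δ ^ k) x ↔ g.le x⁻¹ (g.Δ ^ (-k)) := by
  unfold le
  rw [← g.conj_zpow_delta_mem_iff k]
  group

lemma isInf_iff_isSup_inv (x : G) (k : ℤ) : g.IsInf x k ↔ g.IsSup x⁻¹ (-k) := by
  unfold IsInf IsSup
  rw [neg_surjective.forall]
  simp only [g.le_zpow_delta_iff_inv_le, neg_neg, neg_le]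

lemma isSup_iff_isInf_inv (x : G) (k : ℤ) : g.IsSup x k ↔ g.IsInf x⁻¹ (-k) := by
  simpa using (g.isInf_iff_isSup_inv x⁻¹ (-k)).symm

lemma Absorbable.inv {y : G} (h : g.Absorbable y) : g.Absorbable y⁻¹ := by
  obtain ⟨hy, x, i, s, hxi, hxs, hxyi, hxys⟩ := h
  refine ⟨?_, x * y, i, s, hxyi, hxys, by simpa using hxi, by simpa using hxs⟩
  rcases hy with hy | hy
  · exact .inr (by simpa using (g.isInf_iff_isSup_inv y 0).mp hy)
  · exact .inl (by simpa using (g.isSup_iff_isInf_inv y 0).mp hy)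

end GarsideStructure

/-- In a Garside group, `y` is absorbable if and only if `y⁻¹` is absorbable. -/
theorem garside_absorbable_inv_iff {G : Type*} [Group G] (g : GarsideStructure G) (y : G) :
    g.Absorbable y ↔ g.Absorbable y⁻¹ :=
  ⟨GarsideStructure.Absorbable.inv g, fun h => inv_inv y ▸ GarsideStructure.Absorbable.inv g h⟩
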